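/- arXiv:math/9806044 — 4 statements merged into one kernel-verified Lean document; each statement's English description precedes it below -/
import Mathlib

section
/- Let A be a finite-dimensional unital associative algebra over a field K which is a Frobenius algebra, i.e. there is an isomorphism λ_L : A → A* of left A-modules. Then A possesses a K-linear comultiplication δ : A → A ⊗ A which is coassociative ((δ ⊗ id_A) ∘ δ = (id_A ⊗ δ) ∘ δ), admits a counit ε : A → K ((ε ⊗ id_A) ∘ δ = id_A = (id_A ⊗ ε) ∘ δ), and is a map of A-bimodules, i.e. δ(a x b) = a · δ(x) · b for all a, x, b ∈ A, where A ⊗ A carries the outer bimodule structure a·(u ⊗ v)·b = (a u) ⊗ (v b). -/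
open TensorProduct

/-- A Frobenius algebra (finite-dimensional algebra `A` with a left
`A`-module isomorphism `λ_L : A ≃ A*`, where `(a · ζ)(b) = ζ(b a)`) possesses a
coassociative counital comultiplication `δ : A → A ⊗ A` which is a map of
`A`-bimodules for the outer bimodule structure on `A ⊗ A`. -/
theorem frobenius_exists_comultiplication
    {K : Type*} [Field K] {A : Type*} [Ring A] [Algebra K A] [FiniteDimensional K A]
    (lL : A ≃ₗ[K] Module.Dual K A)
    (hlL : ∀ a x b : A, lL (a * x) b = lL x (b * a)) :
    ∃ (δ : A →ₗ[K] A ⊗[K] A) (ε : A →ₗ[K] K),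
      (∀ a : A,
        (TensorProduct.assoc K A A A)
            ((TensorProduct.map δ (LinearMap.id : A →ₗ[K] A)) (δ a)) =
          (TensorProduct.map (LinearMap.id : A →ₗ[K] A) δ) (δ a)) ∧
      (∀ a : A,
        (TensorProduct.lid K A)
            ((TensorProduct.map ε (LinearMap.id : A →ₗ[K] A)) (δ a)) = a) ∧
      (∀ a : A,
        (TensorProduct.rid K A)
            ((TensorProduct.map (LinearMap.id : A →ₗ[K] A) ε) (δ a)) = a) ∧
      (∀ a x b : A,
        δ (a * x * b) =
          (TensorProduct.map (LinearMap.mulLeft K a) (LinearMap.mulRight K b)) (δ x)) := by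
  classical
  set ι := Module.Free.ChooseBasisIndex K A with hι
  let e : Module.Basis ι K A := Module.Free.chooseBasis K A
  let FB : Module.Basis ι K A := ((e.map lL).dualBasis).map (Module.evalEquiv K A).symm
  have hL : ∀ x b : A, lL x b = lL 1 (b * x) := by
    intro x b
    have := hlL x 1 b
    simpa using this
  have hdual : ∀ i j : ι, lL (e j) (FB i) = if j = i then 1 else 0 := by
    intro i j
    have h1 : lL (e j) (FB i)
        = ((e.map lL) j) ((Module.evalEquiv K A).symm ((e.map lL).dualBasis i)) := by
      simp [FB, Module.Basis.map_apply]
    rw [h1, Module.apply_evalEquiv_symm_apply, Module.Basis.dualBasis_apply_self]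
  have key1 : ∀ (a : A) (i : ι), lL (e i) a = FB.repr a i := by
    intro a i
    conv_lhs => rw [← FB.sum_repr a]
    rw [map_sum]
    simp [hdual]
  have key2 : ∀ (a : A) (i : ι), lL a (FB i) = e.repr a i := by
    intro a i
    conv_lhs => rw [← e.sum_repr a]
    rw [map_sum, LinearMap.sum_apply]
    simp [hdual]
  have exp1 : ∀ a : A, ∑ i, lL (e i) a • FB i = a := by
    intro a
    rw [Finset.sum_congr rfl fun i _ => by rw [key1 a i]]
    exact FB.sum_repr a
  have exp2 : ∀ a : A, ∑ i, lL a (FB i) • e i = a := by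
    intro a
    rw [Finset.sum_congr rfl fun i _ => by rw [key2 a i]]
    exact e.sum_repr a
  let δ : A →ₗ[K] A ⊗[K] A :=
    ∑ i, ((TensorProduct.mk K A A).flip (FB i)).comp (LinearMap.mulRight K (e i))
  have hδ : ∀ a : A, δ a = ∑ i, (a * e i) ⊗ₜ[K] FB i := by
    intro a
    simp [δ, LinearMap.sum_apply]
  -- the Casimir commutation identity
  have cas : ∀ a : A, ∑ i, (a * e i) ⊗ₜ[K] FB i = ∑ i, e i ⊗ₜ[K] (FB i * a) := by
    intro a
    have l1 : ∀ i : ι, (a * e i) ⊗ₜ[K] FB i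
        = ∑ j, lL (a * e i) (FB j) • (e j ⊗ₜ[K] FB i) := by
      intro i
      conv_lhs => rw [← exp2 (a * e i)]
      rw [TensorProduct.sum_tmul]
      simp [TensorProduct.smul_tmul']
    have l2 : ∀ i : ι, e i ⊗ₜ[K] (FB i * a)
        = ∑ j, lL (e j) (FB i * a) • (e i ⊗ₜ[K] FB j) := by
      intro i
      conv_lhs => rw [← exp1 (FB i * a)]
      rw [TensorProduct.tmul_sum]
      simp [TensorProduct.tmul_smul]
    calc ∑ i, (a * e i) ⊗ₜ[K] FB i
        = ∑ i, ∑ j, lL (a * e i) (FB j) • (e j ⊗ₜ[K] FB i) :=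
          Finset.sum_congr rfl fun i _ => l1 i
      _ = ∑ j, ∑ i, lL (a * e i) (FB j) • (e j ⊗ₜ[K] FB i) := Finset.sum_comm
      _ = ∑ j, ∑ i, lL (e i) (FB j * a) • (e j ⊗ₜ[K] FB i) := by
          refine Finset.sum_congr rfl fun j _ => Finset.sum_congr rfl fun i _ => ?_
          rw [hL (a * e i) (FB j), hL (e i) (FB j * a), mul_assoc]
      _ = ∑ i, e i ⊗ₜ[K] (FB i * a) := by
          refine Finset.sum_congr rfl fun j _ => ?_
          rw [l2 j]
  have hδ2 : ∀ a : A, δ a = ∑ i, e i ⊗ₜ[K] (FB i * a) := fun a => (hδ a).trans (cas a)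
  have genCas : ∀ c b : A,
      ∑ i, ((c * b) * e i) ⊗ₜ[K] FB i = ∑ i, (c * e i) ⊗ₜ[K] (FB i * b) := by
    intro c b
    have h1 := congrArg
      (TensorProduct.map (LinearMap.id : A →ₗ[K] A) (LinearMap.mulRight K b)) (cas c)
    simp only [map_sum, TensorProduct.map_tmul, LinearMap.id_coe, id_eq,
      LinearMap.mulRight_apply] at h1
    rw [h1, cas (c * b)]
    exact Finset.sum_congr rfl fun i _ => by rw [mul_assoc]
  refine ⟨δ, lL 1, ?_, ?_, ?_, ?_⟩
  · -- coassociativity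
    intro a
    have L : (TensorProduct.assoc K A A A)
        ((TensorProduct.map δ (LinearMap.id : A →ₗ[K] A)) (δ a))
        = ∑ i, ∑ j, e j ⊗ₜ[K] ((FB j * (a * e i)) ⊗ₜ[K] FB i) := by
      rw [hδ a, map_sum, map_sum]
      refine Finset.sum_congr rfl fun i _ => ?_
      rw [TensorProduct.map_tmul, hδ2 (a * e i), TensorProduct.sum_tmul, map_sum]
      exact Finset.sum_congr rfl fun j _ => by
        simp [TensorProduct.assoc_tmul]
    have R : (TensorProduct.map (LinearMap.id : A →ₗ[K] A) δ) (δ a)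
        = ∑ j, ∑ i, e j ⊗ₜ[K] ((FB j * a * e i) ⊗ₜ[K] FB i) := by
      rw [hδ2 a, map_sum]
      refine Finset.sum_congr rfl fun j _ => ?_
      rw [TensorProduct.map_tmul, hδ (FB j * a), TensorProduct.tmul_sum]
      simp
    rw [L, R, Finset.sum_comm]
    exact Finset.sum_congr rfl fun j _ => Finset.sum_congr rfl fun i _ => by
      rw [mul_assoc]
  · -- left counit
    intro a
    conv_lhs => rw [hδ a]
    simp only [map_sum, TensorProduct.map_tmul, LinearMap.id_coe, id_eq,
      TensorProduct.lid_tmul]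
    calc ∑ i, lL 1 (a * e i) • FB i = ∑ i, lL (e i) a • FB i :=
          Finset.sum_congr rfl fun i _ => by rw [← hL (e i) a]
      _ = a := exp1 a
  · -- right counit
    intro a
    conv_lhs => rw [hδ a]
    simp only [map_sum, TensorProduct.map_tmul, LinearMap.id_coe, id_eq,
      TensorProduct.rid_tmul]
    calc ∑ i, lL 1 (FB i) • (a * e i) = ∑ i, a * (lL 1 (FB i) • e i) :=
          Finset.sum_congr rfl fun i _ => (mul_smul_comm _ _ _).symm
      _ = a * ∑ i, lL 1 (FB i) • e i := by rw [Finset.mul_sum]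
      _ = a := by rw [exp2 1, mul_one]
  · -- bimodule map
    intro a x b
    rw [hδ (a * x * b), hδ x]
    simp only [map_sum, TensorProduct.map_tmul, LinearMap.mulLeft_apply,
      LinearMap.mulRight_apply]
    have h := congrArg
      (TensorProduct.map (LinearMap.mulLeft K a) (LinearMap.id : A →ₗ[K] A)) (genCas x b)
    simp only [map_sum, TensorProduct.map_tmul, LinearMap.mulLeft_apply, LinearMap.id_coe,
      id_eq] at h
    simp only [mul_assoc] at h ⊢
    exact h
end

section
/- Let A be a finite-dimensional unital associative algebra over a field K. If A possesses a K-linear comultiplication δ : A → A ⊗ A which is coassociative, admits a counit ε : A → K, and is a map of A-bimodules (δ(a x b) = a · δ(x) · b for all a, x, b ∈ A, where A ⊗ A carries the outer bimodule structure a·(u ⊗ v)·b = (a u) ⊗ (v b)), then A is a Frobenius algebra, i.e. there exists an isomorphism λ_L : A → A* of left A-modules. -/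
open TensorProduct

section FrobeniusPairing

variable {K A : Type*} [CommRing K] [Ring A] [Algebra K A]

def frobeniusPairing (ε : A →ₗ[K] K) : A →ₗ[K] Module.Dual K A :=
  (LinearMap.mul K A).flip.compr₂ ε

@[simp]
theorem frobeniusPairing_apply (ε : A →ₗ[K] K) (x b : A) :
    frobeniusPairing ε x b = ε (b * x) :=
  rfl

theorem frobeniusPairing_mul_apply (ε : A →ₗ[K] K) (a x b : A) :
    frobeniusPairing ε (a * x) b = frobeniusPairing ε x (b * a) := by
  simp only [frobeniusPairing_apply, mul_assoc]

/-- Right `A`-linearity gives `δ x = (id ⊗ (· * x)) (δ 1)`, so if `ε (· * x) = 0` then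
`(id ⊗ ε) (δ x) = 0`, and the counit axiom forces `x = 0`. -/
theorem frobeniusPairing_injective_of_comul (δ : A →ₗ[K] A ⊗[K] A) (ε : A →ₗ[K] K)
    (hcounit_r : ∀ a : A, TensorProduct.rid K A (TensorProduct.map LinearMap.id ε (δ a)) = a)
    (hright : ∀ x b : A,
      δ (x * b) = TensorProduct.map LinearMap.id (LinearMap.mulRight K b) (δ x)) :
    Function.Injective (frobeniusPairing ε) := by
  rw [injective_iff_map_eq_zero]
  intro x hx
  have hεx : ε ∘ₗ LinearMap.mulRight K x = 0 := hx
  have hδx : δ x = TensorProduct.map LinearMap.id (LinearMap.mulRight K x) (δ 1) := by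
    simpa only [one_mul] using hright 1 x
  rw [← hcounit_r x, hδx, ← LinearMap.comp_apply (TensorProduct.map _ _),
    ← TensorProduct.map_comp, hεx, TensorProduct.map_zero_right, LinearMap.zero_apply, map_zero]

end FrobeniusPairing

theorem comultiplication_implies_frobenius_general
    {K : Type*} [Field K] {A : Type*} [Ring A] [Algebra K A] [FiniteDimensional K A]
    (δ : A →ₗ[K] A ⊗[K] A) (ε : A →ₗ[K] K)
    (hcounit_r : ∀ a : A,
      (TensorProduct.rid K A)
          ((TensorProduct.map (LinearMap.id : A →ₗ[K] A) ε) (δ a)) = a)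
    (hbimod : ∀ a x b : A,
      δ (a * x * b) =
        (TensorProduct.map (LinearMap.mulLeft K a) (LinearMap.mulRight K b)) (δ x)) :
    ∃ lL : A ≃ₗ[K] Module.Dual K A,
      ∀ a x b : A, lL (a * x) b = lL x (b * a) := by
  have hright : ∀ x b : A,
      δ (x * b) = TensorProduct.map LinearMap.id (LinearMap.mulRight K b) (δ x) := by
    intro x b
    simpa only [one_mul, LinearMap.mulLeft_one] using hbimod 1 x b
  have hinj := frobeniusPairing_injective_of_comul δ ε hcounit_r hright
  exact ⟨LinearMap.linearEquivOfInjective _ hinj Subspace.dual_finrank_eq.symm,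
    frobeniusPairing_mul_apply ε⟩

/-- If a finite-dimensional algebra `A` possesses a coassociative
counital comultiplication `δ : A → A ⊗ A` which is a map of `A`-bimodules (for the
outer bimodule structure on `A ⊗ A`), then `A` is a Frobenius algebra: there is an
isomorphism `λ_L : A ≃ A*` of left `A`-modules, where `(a · ζ)(b) = ζ(b a)`. -/
theorem comultiplication_implies_frobenius
    {K : Type*} [Field K] {A : Type*} [Ring A] [Algebra K A] [FiniteDimensional K A]
    (δ : A →ₗ[K] A ⊗[K] A) (ε : A →ₗ[K] K)
    (hcoassoc : ∀ a : A,
      (TensorProduct.assoc K A A A)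
          ((TensorProduct.map δ (LinearMap.id : A →ₗ[K] A)) (δ a)) =
        (TensorProduct.map (LinearMap.id : A →ₗ[K] A) δ) (δ a))
    (hcounit_l : ∀ a : A,
      (TensorProduct.lid K A)
          ((TensorProduct.map ε (LinearMap.id : A →ₗ[K] A)) (δ a)) = a)
    (hcounit_r : ∀ a : A,
      (TensorProduct.rid K A)
          ((TensorProduct.map (LinearMap.id : A →ₗ[K] A) ε) (δ a)) = a)
    (hbimod : ∀ a x b : A,
      δ (a * x * b) =
        (TensorProduct.map (LinearMap.mulLeft K a) (LinearMap.mulRight K b)) (δ x)) :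
    ∃ lL : A ≃ₗ[K] Module.Dual K A,
      ∀ a x b : A, lL (a * x) b = lL x (b * a) :=
  comultiplication_implies_frobenius_general δ ε hcounit_r hbimod
end

section
/- Let A be a finite-dimensional Frobenius algebra over a field K with Frobenius comultiplication δ and counit ε, and let M be a right A-comodule with structure map ∇ : M → M ⊗ A. Define m_∇ : M ⊗ A → M as the composition (id_M ⊗ ε) ∘ (id_M ⊗ μ) ∘ (∇ ⊗ id_A), where μ : A ⊗ A → A is multiplication. Then m_∇ endows M with the structure of a right A-module: m_∇ ∘ (m_∇ ⊗ id_A) = m_∇ ∘ (id_M ⊗ μ) and m_∇(x ⊗ 1_A) = x for all x ∈ M. -/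
/-!
Write `φ_a = ε(- · a)`. Unwinding the definition, `m_∇(x ⊗ a)` is `∇x` with its `A`-factor
contracted against `φ_a`, so `m_∇(m_∇(x ⊗ a) ⊗ b)` contracts `(∇ ⊗ id)(∇x) = (id ⊗ δ)(∇x)`
against `φ_b ⊗ φ_a`. Since `δ` is a map of right `A`-modules, `(φ_b ⊗ φ_a)(δ c)` equals
`φ_b((id ⊗ ε)(δ(c a))) = ε(c a b) = φ_{ab}(c)`, which is associativity; unitality is the
counit axiom of `∇`, because `φ_1 = ε`.
-/

open TensorProduct

/-- The module structure map `m_∇ = (id_M ⊗ ε) ∘ (id_M ⊗ μ) ∘ (∇ ⊗ id_A)`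
induced on a right `A`-comodule `(M, ∇)` by the counit `ε` of the Frobenius
comultiplication, with `μ : A ⊗ A → A` the multiplication. -/
noncomputable def modOf {K : Type*} [Field K] {A : Type*} [Ring A] [Algebra K A]
    {M : Type*} [AddCommGroup M] [Module K M]
    (ε : A →ₗ[K] K) (co : M →ₗ[K] M ⊗[K] A) : M ⊗[K] A →ₗ[K] M :=
  (TensorProduct.rid K M).toLinearMap ∘ₗ
    (TensorProduct.map (LinearMap.id : M →ₗ[K] M) ε) ∘ₗ
      (TensorProduct.map (LinearMap.id : M →ₗ[K] M) (LinearMap.mul' K A)) ∘ₗ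
        (TensorProduct.assoc K M A A).toLinearMap ∘ₗ
          (TensorProduct.map co (LinearMap.id : A →ₗ[K] A))

open LinearMap

section SliceRight

variable {K A B M : Type*} [CommSemiring K] [AddCommMonoid A] [Module K A]
  [AddCommMonoid B] [Module K B] [AddCommMonoid M] [Module K M]

noncomputable def sliceRight (φ : A →ₗ[K] K) : M ⊗[K] A →ₗ[K] M :=
  (TensorProduct.rid K M).toLinearMap ∘ₗ map id φ

@[simp]
lemma sliceRight_tmul (φ : A →ₗ[K] K) (x : M) (a : A) :
    sliceRight φ (x ⊗ₜ[K] a) = φ a • x := by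
  simp [sliceRight]

lemma sliceRight_map_id (φ : B →ₗ[K] K) (f : A →ₗ[K] B) (t : M ⊗[K] A) :
    sliceRight φ (map id f t) = sliceRight (φ ∘ₗ f) t := by
  simp only [sliceRight, coe_comp, Function.comp_apply, map_map, id_comp]

lemma sliceRight_sliceRight (co : M →ₗ[K] M ⊗[K] A) (φ ψ : A →ₗ[K] K)
    (t : M ⊗[K] A) :
    sliceRight ψ (co (sliceRight φ t)) =
      sliceRight (mul' K K ∘ₗ map ψ φ) (TensorProduct.assoc K M A A (map co id t)) := by
  induction t using TensorProduct.induction_on with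
  | zero => simp
  | add s t hs ht => simp only [map_add, hs, ht]
  | tmul y c =>
    simp only [sliceRight_tmul, map_smul, map_tmul, id_coe, id_eq]
    induction co y using TensorProduct.induction_on with
    | zero => simp
    | add s t hs ht => simp only [map_add, add_tmul, smul_add, hs, ht]
    | tmul z u => simp [smul_smul, mul_comm]

lemma mul'_map_eq_sliceRight (ψ φ : A →ₗ[K] K) (t : A ⊗[K] A) :
    mul' K K (map ψ φ t) = ψ (sliceRight φ t) := by
  induction t using TensorProduct.induction_on with
  | zero => simp
  | add s t hs ht => simp only [map_add, hs, ht]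
  | tmul u v => simp [mul_comm]

end SliceRight

lemma mul'_map_mulRight_comp_comul {K A : Type*} [CommSemiring K] [Semiring A] [Algebra K A]
    (δ : A →ₗ[K] A ⊗[K] A) (ε : A →ₗ[K] K)
    (hcounit_r : ∀ a : A, sliceRight ε (δ a) = a)
    (hδ_mul : ∀ c a : A, δ (c * a) = map id (mulRight K a) (δ c)) (a b : A) :
    (mul' K K ∘ₗ map (ε ∘ₗ mulRight K b) (ε ∘ₗ mulRight K a)) ∘ₗ δ =
      ε ∘ₗ mulRight K (a * b) := by
  ext c
  calc mul' K K (map (ε ∘ₗ mulRight K b) (ε ∘ₗ mulRight K a) (δ c))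
      = ε (sliceRight ε (δ (c * a)) * b) := by
        rw [mul'_map_eq_sliceRight, ← sliceRight_map_id, ← hδ_mul]; rfl
    _ = ε (c * (a * b)) := by rw [hcounit_r, mul_assoc]

lemma modOf_tmul {K A M : Type*} [Field K] [Ring A] [Algebra K A] [AddCommGroup M] [Module K M]
    (ε : A →ₗ[K] K) (co : M →ₗ[K] M ⊗[K] A) (x : M) (a : A) :
    modOf ε co (x ⊗ₜ[K] a) = sliceRight (ε ∘ₗ mulRight K a) (co x) := by
  simp only [modOf, coe_comp, Function.comp_apply, map_tmul, id_coe, id_eq]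
  induction co x using TensorProduct.induction_on with
  | zero => simp
  | add s t hs ht => simp only [add_tmul, map_add, hs, ht]
  | tmul y c => simp

theorem comodule_to_module_general
    {K : Type*} [Field K] {A : Type*} [Ring A] [Algebra K A]
    (δ : A →ₗ[K] A ⊗[K] A) (ε : A →ₗ[K] K)
    (hcounit_r : ∀ a : A,
      (TensorProduct.rid K A)
          ((TensorProduct.map (LinearMap.id : A →ₗ[K] A) ε) (δ a)) = a)
    (hbimod : ∀ a x b : A,
      δ (a * x * b) =
        (TensorProduct.map (LinearMap.mulLeft K a) (LinearMap.mulRight K b)) (δ x))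
    {M : Type*} [AddCommGroup M] [Module K M] (co : M →ₗ[K] M ⊗[K] A)
    (hco_coassoc : ∀ x : M,
      (TensorProduct.assoc K M A A)
          ((TensorProduct.map co (LinearMap.id : A →ₗ[K] A)) (co x)) =
        (TensorProduct.map (LinearMap.id : M →ₗ[K] M) δ) (co x))
    (hco_counit : ∀ x : M,
      (TensorProduct.rid K M)
          ((TensorProduct.map (LinearMap.id : M →ₗ[K] M) ε) (co x)) = x) :
    (∀ (x : M) (a b : A),
      modOf ε co (modOf ε co (x ⊗ₜ[K] a) ⊗ₜ[K] b) = modOf ε co (x ⊗ₜ[K] (a * b))) ∧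
    (∀ x : M, modOf ε co (x ⊗ₜ[K] (1 : A)) = x) := by
  have hδ_mul : ∀ c a : A, δ (c * a) = map id (mulRight K a) (δ c) := fun c a => by
    simpa [mulLeft_one] using hbimod 1 c a
  refine ⟨fun x a b => ?_, fun x => ?_⟩
  · rw [modOf_tmul, modOf_tmul, modOf_tmul, sliceRight_sliceRight, hco_coassoc,
      sliceRight_map_id, mul'_map_mulRight_comp_comul δ ε hcounit_r hδ_mul]
  · rw [modOf_tmul, mulRight_one, comp_id]
    exact hco_counit x

/-- For a right `A`-comodule `(M, ∇)` over a Frobenius algebra `A`,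
the map `m_∇` endows `M` with the structure of a right `A`-module:
`m_∇ ∘ (m_∇ ⊗ id_A) = m_∇ ∘ (id_M ⊗ μ)` and `m_∇(x ⊗ 1_A) = x`. -/
theorem comodule_to_module
    {K : Type*} [Field K] {A : Type*} [Ring A] [Algebra K A] [FiniteDimensional K A]
    (δ : A →ₗ[K] A ⊗[K] A) (ε : A →ₗ[K] K)
    (hcoassoc : ∀ a : A,
      (TensorProduct.assoc K A A A)
          ((TensorProduct.map δ (LinearMap.id : A →ₗ[K] A)) (δ a)) =
        (TensorProduct.map (LinearMap.id : A →ₗ[K] A) δ) (δ a))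
    (hcounit_l : ∀ a : A,
      (TensorProduct.lid K A)
          ((TensorProduct.map ε (LinearMap.id : A →ₗ[K] A)) (δ a)) = a)
    (hcounit_r : ∀ a : A,
      (TensorProduct.rid K A)
          ((TensorProduct.map (LinearMap.id : A →ₗ[K] A) ε) (δ a)) = a)
    (hbimod : ∀ a x b : A,
      δ (a * x * b) =
        (TensorProduct.map (LinearMap.mulLeft K a) (LinearMap.mulRight K b)) (δ x))
    {M : Type*} [AddCommGroup M] [Module K M] (co : M →ₗ[K] M ⊗[K] A)
    (hco_coassoc : ∀ x : M,
      (TensorProduct.assoc K M A A)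
          ((TensorProduct.map co (LinearMap.id : A →ₗ[K] A)) (co x)) =
        (TensorProduct.map (LinearMap.id : M →ₗ[K] M) δ) (co x))
    (hco_counit : ∀ x : M,
      (TensorProduct.rid K M)
          ((TensorProduct.map (LinearMap.id : M →ₗ[K] M) ε) (co x)) = x) :
    (∀ (x : M) (a b : A),
      modOf ε co (modOf ε co (x ⊗ₜ[K] a) ⊗ₜ[K] b) = modOf ε co (x ⊗ₜ[K] (a * b))) ∧
    (∀ x : M, modOf ε co (x ⊗ₜ[K] (1 : A)) = x) :=
  comodule_to_module_general δ ε hcounit_r hbimod co hco_coassoc hco_counit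
end

section
/- Let A be a finite-dimensional Frobenius algebra over a field K which is a symmetric algebra, i.e. the form η(a ⊗ b) = λ_L(1_A)(a b) satisfies η(a ⊗ b) = η(b ⊗ a). Let D be the left A^e-submodule of A ⊗ A generated by T(δ(1_A)), where A^e = A ⊗ A^op acts by (a ⊗ b)·(u ⊗ v) = (a u) ⊗ (v b) and T is the flip. Then D equals the image δ(A) of δ as left A^e-submodules of A ⊗ A. -/
open TensorProduct

/-!
Under the map `A ⊗ A → End_K(A)`, `u ⊗ v ↦ (x ↦ ε(x u) • v)`, which is injective because
the Frobenius form is nondegenerate, both the Casimir element `δ 1` and its flip go to the identity: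
for `δ 1` this is the left counit axiom, and for the flip it is the right counit axiom once the
symmetry `ε(x v) = ε(v x)` is used. Hence `T(δ 1) = δ 1`, and since `δ` is a bimodule map,
`(a ⊗ b) · δ 1 = δ(a b)`, so the `A^e`-span of `δ 1` is `δ(A)`.
-/

theorem dualTensorHom_comp_rTensor_injective {K M N P : Type*} [Field K]
    [AddCommGroup M] [Module K M] [AddCommGroup N] [Module K N] [AddCommGroup P] [Module K P]
    [FiniteDimensional K P] {f : M →ₗ[K] Module.Dual K P} (hf : Function.Injective f) :
    Function.Injective (dualTensorHom K P N ∘ₗ f.rTensor N) :=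
  dualTensorHom_bijective.injective.comp (Module.Flat.rTensor_preserves_injective_linearMap f hf)

section
variable {K A : Type*} [Field K] [Ring A] [Algebra K A]

theorem dualTensorHom_rTensor_apply_eq_lid_map
    {f : A →ₗ[K] Module.Dual K A} {ε : A →ₗ[K] K}
    (hf : ∀ u x : A, f u x = ε (x * u)) (t : A ⊗[K] A) (x : A) :
    (dualTensorHom K A A ∘ₗ f.rTensor A) t x =
      TensorProduct.lid K A
        (map ε LinearMap.id (map (LinearMap.mulLeft K x) LinearMap.id t)) := by
  induction t using TensorProduct.induction_on with
  | zero => simp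
  | tmul u v => simp [dualTensorHom_apply, hf]
  | add s t hs ht => simp only [map_add, LinearMap.add_apply, hs, ht]

theorem dualTensorHom_rTensor_comm_apply_eq_rid_map
    {f : A →ₗ[K] Module.Dual K A} {ε : A →ₗ[K] K}
    (hf : ∀ u x : A, f u x = ε (u * x)) (t : A ⊗[K] A) (x : A) :
    (dualTensorHom K A A ∘ₗ f.rTensor A) (TensorProduct.comm K A A t) x =
      TensorProduct.rid K A
        (map LinearMap.id ε (map LinearMap.id (LinearMap.mulRight K x) t)) := by
  induction t using TensorProduct.induction_on with
  | zero => simp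
  | tmul u v => simp [dualTensorHom_apply, hf]
  | add s t hs ht => simp only [map_add, LinearMap.add_apply, hs, ht]

variable {δ : A →ₗ[K] A ⊗[K] A}

theorem map_mulLeft_id_delta_one
    (hbimod : ∀ a x b : A,
      δ (a * x * b) = map (LinearMap.mulLeft K a) (LinearMap.mulRight K b) (δ x))
    (x : A) : map (LinearMap.mulLeft K x) LinearMap.id (δ 1) = δ x := by
  simpa using (hbimod x 1 1).symm

theorem map_id_mulRight_delta_one
    (hbimod : ∀ a x b : A,
      δ (a * x * b) = map (LinearMap.mulLeft K a) (LinearMap.mulRight K b) (δ x))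
    (x : A) : map LinearMap.id (LinearMap.mulRight K x) (δ 1) = δ x := by
  simpa using (hbimod 1 1 x).symm

theorem span_map_mulLeft_mulRight_delta_one
    (hbimod : ∀ a x b : A,
      δ (a * x * b) = map (LinearMap.mulLeft K a) (LinearMap.mulRight K b) (δ x)) :
    Submodule.span K
        {y | ∃ a b : A, y = map (LinearMap.mulLeft K a) (LinearMap.mulRight K b) (δ 1)} =
      LinearMap.range δ := by
  apply le_antisymm
  · rw [Submodule.span_le]
    rintro _ ⟨a, b, rfl⟩
    exact ⟨a * b, by simpa using hbimod a 1 b⟩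
  · rintro _ ⟨x, rfl⟩
    exact Submodule.subset_span
      ⟨x, 1, (map_mulLeft_id_delta_one hbimod x).symm.trans (by simp)⟩

theorem comm_delta_one [FiniteDimensional K A] (lL : A ≃ₗ[K] Module.Dual K A) {ε : A →ₗ[K] K}
    (hL : ∀ u x : A, lL u x = ε (x * u)) (hR : ∀ u x : A, lL u x = ε (u * x))
    (hcounit_l : ∀ a : A, TensorProduct.lid K A (map ε LinearMap.id (δ a)) = a)
    (hcounit_r : ∀ a : A, TensorProduct.rid K A (map LinearMap.id ε (δ a)) = a)
    (hbimod : ∀ a x b : A,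
      δ (a * x * b) = map (LinearMap.mulLeft K a) (LinearMap.mulRight K b) (δ x)) :
    TensorProduct.comm K A A (δ 1) = δ 1 := by
  refine dualTensorHom_comp_rTensor_injective (N := A) lL.injective
    (LinearMap.ext fun x => ?_)
  rw [dualTensorHom_rTensor_comm_apply_eq_rid_map hR, dualTensorHom_rTensor_apply_eq_lid_map hL,
    map_mulLeft_id_delta_one hbimod, map_id_mulRight_delta_one hbimod, hcounit_l, hcounit_r]

end

theorem symmetric_algebra_D_eq_image_delta_general
    {K : Type*} [Field K] {A : Type*} [Ring A] [Algebra K A] [FiniteDimensional K A]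
    (lL : A ≃ₗ[K] Module.Dual K A)
    (hlL : ∀ a x b : A, lL (a * x) b = lL x (b * a))
    (δ : A →ₗ[K] A ⊗[K] A) (ε : A →ₗ[K] K)
    (hcounit_l : ∀ a : A,
      (TensorProduct.lid K A)
          ((TensorProduct.map ε (LinearMap.id : A →ₗ[K] A)) (δ a)) = a)
    (hcounit_r : ∀ a : A,
      (TensorProduct.rid K A)
          ((TensorProduct.map (LinearMap.id : A →ₗ[K] A) ε) (δ a)) = a)
    (hbimod : ∀ a x b : A,
      δ (a * x * b) =
        (TensorProduct.map (LinearMap.mulLeft K a) (LinearMap.mulRight K b)) (δ x))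
    (hεlL : ∀ a : A, ε a = lL 1 a)
    (hsymm : ∀ a b : A, lL 1 (a * b) = lL 1 (b * a)) :
    Submodule.span K
        {y : A ⊗[K] A | ∃ a b : A,
          y = (TensorProduct.map (LinearMap.mulLeft K a) (LinearMap.mulRight K b))
                ((TensorProduct.comm K A A) (δ 1))} =
      LinearMap.range δ := by
  have hL : ∀ u x : A, lL u x = ε (x * u) := fun u x => by
    simpa [hεlL] using hlL u 1 x
  have hR : ∀ u x : A, lL u x = ε (u * x) := fun u x => by
    rw [hL, hεlL, hsymm, hεlL]
  rw [comm_delta_one lL hL hR hcounit_l hcounit_r hbimod]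
  exact span_map_mulLeft_mulRight_delta_one hbimod

/-- Let `A` be a Frobenius algebra which is a symmetric algebra
(`η(a ⊗ b) = η(b ⊗ a)` for `η(a ⊗ b) = λ_L(1)(a b)`). Then the left
`A^e`-submodule `D` of `A ⊗ A` generated by `T(δ(1))` — i.e. the span of the orbit
of `T(δ(1))` under the action `(a ⊗ b) · (u ⊗ v) = (a u) ⊗ (v b)` — equals the
image `δ(A)` of `δ`. -/
theorem symmetric_algebra_D_eq_image_delta
    {K : Type*} [Field K] {A : Type*} [Ring A] [Algebra K A] [FiniteDimensional K A]
    (lL : A ≃ₗ[K] Module.Dual K A)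
    (hlL : ∀ a x b : A, lL (a * x) b = lL x (b * a))
    (δ : A →ₗ[K] A ⊗[K] A) (ε : A →ₗ[K] K)
    (hcoassoc : ∀ a : A,
      (TensorProduct.assoc K A A A)
          ((TensorProduct.map δ (LinearMap.id : A →ₗ[K] A)) (δ a)) =
        (TensorProduct.map (LinearMap.id : A →ₗ[K] A) δ) (δ a))
    (hcounit_l : ∀ a : A,
      (TensorProduct.lid K A)
          ((TensorProduct.map ε (LinearMap.id : A →ₗ[K] A)) (δ a)) = a)
    (hcounit_r : ∀ a : A,
      (TensorProduct.rid K A)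
          ((TensorProduct.map (LinearMap.id : A →ₗ[K] A) ε) (δ a)) = a)
    (hbimod : ∀ a x b : A,
      δ (a * x * b) =
        (TensorProduct.map (LinearMap.mulLeft K a) (LinearMap.mulRight K b)) (δ x))
    (hεlL : ∀ a : A, ε a = lL 1 a)
    (hsymm : ∀ a b : A, lL 1 (a * b) = lL 1 (b * a)) :
    Submodule.span K
        {y : A ⊗[K] A | ∃ a b : A,
          y = (TensorProduct.map (LinearMap.mulLeft K a) (LinearMap.mulRight K b))
                ((TensorProduct.comm K A A) (δ 1))} =
      LinearMap.range δ :=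
  symmetric_algebra_D_eq_image_delta_general lL hlL δ ε hcounit_l hcounit_r hbimod hεlL hsymm
end
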